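/- With q(t,s) = min(t,s), λ(dt) = √3(1_{[0,1/2]}(t) dt + (1/2)δ_{1/2}(dt)) and μ(dt) = √3(1_{[1/2,1]}(t) dt − (1/2)δ_{1/2}(dt)), the cross term vanishes: ∫₀¹∫₀¹ q(t,s) λ(dt) μ(ds) = 0, and moreover ∫∫ q dλ dλ + ∫∫ q dμ dμ = 1. -/
import Mathlib


/-- Pairing against `λ(dt) = √3 (1_{[0,1/2]}(t) dt + (1/2) δ_{1/2}(dt))`. -/
noncomputable def lamPairing (f : ℝ → ℝ) : ℝ :=
  Real.sqrt 3 * ((∫ t in (0:ℝ)..(1/2), f t) + f (1/2) / 2)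

/-- Pairing against `μ(dt) = √3 (1_{[1/2,1]}(t) dt - (1/2) δ_{1/2}(dt))`. -/
noncomputable def muPairing (f : ℝ → ℝ) : ℝ :=
  Real.sqrt 3 * ((∫ t in (1/2:ℝ)..1, f t) - f (1/2) / 2)

lemma lam_congr {f g : ℝ → ℝ} (h : ∀ t ∈ Set.Icc (0:ℝ) (1/2), f t = g t) :
    lamPairing f = lamPairing g := by
  unfold lamPairing
  rw [intervalIntegral.integral_congr (g := g)
      (by rw [Set.uIcc_of_le (by norm_num : (0:ℝ) ≤ 1/2)]; exact h),
    h (1/2) ⟨by norm_num, le_rfl⟩]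

lemma mu_congr {f g : ℝ → ℝ} (h : ∀ t ∈ Set.Icc (1/2:ℝ) 1, f t = g t) :
    muPairing f = muPairing g := by
  unfold muPairing
  rw [intervalIntegral.integral_congr (g := g)
      (by rw [Set.uIcc_of_le (by norm_num : (1/2:ℝ) ≤ 1)]; exact h),
    h (1/2) ⟨le_rfl, by norm_num⟩]

lemma inner_lam {t : ℝ} (h0 : 0 ≤ t) (h1 : t ≤ 1/2) :
    lamPairing (fun s => min t s) = Real.sqrt 3 * (t - t^2/2) := by
  unfold lamPairing
  have hsplit : (∫ s in (0:ℝ)..(1/2), min t s)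
      = (∫ s in (0:ℝ)..t, min t s) + ∫ s in t..(1/2:ℝ), min t s :=
    (intervalIntegral.integral_add_adjacent_intervals
      ((continuous_const.min continuous_id).intervalIntegrable _ _)
      ((continuous_const.min continuous_id).intervalIntegrable _ _)).symm
  have e1 : (∫ s in (0:ℝ)..t, min t s) = ∫ s in (0:ℝ)..t, s := by
    apply intervalIntegral.integral_congr
    intro s hs
    rw [Set.uIcc_of_le h0] at hs
    exact min_eq_right hs.2
  have e2 : (∫ s in t..(1/2:ℝ), min t s) = ∫ s in t..(1/2:ℝ), t := by
    apply intervalIntegral.integral_congr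
    intro s hs
    rw [Set.uIcc_of_le h1] at hs
    exact min_eq_left hs.1
  rw [hsplit, e1, e2, integral_id, intervalIntegral.integral_const,
    smul_eq_mul]
  simp only [min_eq_left h1]
  ring

lemma inner_lam_ge {s : ℝ} (h : 1/2 ≤ s) :
    lamPairing (fun t => min t s) = Real.sqrt 3 * (3/8) := by
  unfold lamPairing
  have e1 : (∫ t in (0:ℝ)..(1/2), min t s) = ∫ t in (0:ℝ)..(1/2), t := by
    apply intervalIntegral.integral_congr
    intro u hu
    rw [Set.uIcc_of_le (by norm_num : (0:ℝ) ≤ 1/2)] at hu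
    exact min_eq_left (hu.2.trans h)
  rw [e1, integral_id]
  simp only [min_eq_left h]
  ring

lemma inner_mu {t : ℝ} (h0 : 1/2 ≤ t) (h1 : t ≤ 1) :
    muPairing (fun s => min t s) = Real.sqrt 3 * (t - t^2/2 - 3/8) := by
  unfold muPairing
  have hsplit : (∫ s in (1/2:ℝ)..1, min t s)
      = (∫ s in (1/2:ℝ)..t, min t s) + ∫ s in t..(1:ℝ), min t s :=
    (intervalIntegral.integral_add_adjacent_intervals
      ((continuous_const.min continuous_id).intervalIntegrable _ _)
      ((continuous_const.min continuous_id).intervalIntegrable _ _)).symm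
  have e1 : (∫ s in (1/2:ℝ)..t, min t s) = ∫ s in (1/2:ℝ)..t, s := by
    apply intervalIntegral.integral_congr
    intro s hs
    rw [Set.uIcc_of_le h0] at hs
    exact min_eq_right hs.2
  have e2 : (∫ s in t..(1:ℝ), min t s) = ∫ s in t..(1:ℝ), t := by
    apply intervalIntegral.integral_congr
    intro s hs
    rw [Set.uIcc_of_le h1] at hs
    exact min_eq_left hs.1
  rw [hsplit, e1, e2, integral_id, intervalIntegral.integral_const,
    smul_eq_mul]
  simp only [min_eq_right h0]
  ring

/-- With `q(t,s) = min t s`: the cross term `∫∫ q dλ dμ` vanishes and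
`∫∫ q dλ dλ + ∫∫ q dμ dμ = 1`. -/
theorem meander_orthogonality_and_normalization :
    muPairing (fun s => lamPairing (fun t => min t s)) = 0 ∧
    lamPairing (fun t => lamPairing (fun s => min t s)) +
      muPairing (fun t => muPairing (fun s => min t s)) = 1 := by
  have h3 : Real.sqrt 3 * Real.sqrt 3 = 3 := Real.mul_self_sqrt (by norm_num)
  constructor
  · rw [mu_congr (g := fun _ => Real.sqrt 3 * (3/8)) (fun s hs => inner_lam_ge hs.1)]
    unfold muPairing
    rw [intervalIntegral.integral_const, smul_eq_mul]
    ring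
  · have hAA : lamPairing (fun t => lamPairing (fun s => min t s)) = 7/8 := by
      rw [lam_congr (g := fun t => Real.sqrt 3 * (t - t^2/2))
        (fun t ht => inner_lam ht.1 ht.2)]
      unfold lamPairing
      rw [intervalIntegral.integral_const_mul,
        intervalIntegral.integral_sub intervalIntegral.intervalIntegrable_id
          (((continuous_pow 2).div_const 2).intervalIntegrable _ _),
        intervalIntegral.integral_div, integral_id,
        integral_pow]
      nlinarith [h3]
    have hBB : muPairing (fun t => muPairing (fun s => min t s)) = 1/8 := by
      rw [mu_congr (g := fun t => Real.sqrt 3 * (t - t^2/2 - 3/8))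
        (fun t ht => inner_mu ht.1 ht.2)]
      unfold muPairing
      rw [intervalIntegral.integral_const_mul,
        intervalIntegral.integral_sub
          (intervalIntegral.intervalIntegrable_id.sub
            (((continuous_pow 2).div_const 2).intervalIntegrable _ _))
          (intervalIntegrable_const),
        intervalIntegral.integral_sub intervalIntegral.intervalIntegrable_id
          (((continuous_pow 2).div_const 2).intervalIntegrable _ _),
        intervalIntegral.integral_div, integral_id,
        integral_pow, intervalIntegral.integral_const, smul_eq_mul]
      nlinarith [h3]
    rw [hAA, hBB]; norm_num
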